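/- arXiv:2104.01143 — 2 statements merged into one kernel-verified Lean document; each statement's English description precedes it below -/
import Mathlib

section
/- Set R = (√2 − 1)/2 and d = (√2 − 1)/2. The pair (L₀, φ₀) with L₀ = d + (3π/4)·R, φ₀(s) = 0 for s ∈ [0, d] and φ₀(s) = (s − d)/R for s ∈ [d, L₀] (a line segment of length (√2 − 1)/2 followed by a circular arc of radius (√2 − 1)/2 and angle 3π/4) is admissible, and its maximal curvature 1/R = 2(√2 + 1) is the minimum of the maximal curvature over all admissible curves; moreover it is the unique admissible curve attaining this minimum. -/
/-!
Let `y(s) = ∫₀^s sin φ`. If `φ` is `K`-Lipschitz, the quantity `cos φ(s) + K y(s)` is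
nondecreasing along the curve: formally its derivative is `(K - φ') sin φ ≥ 0`, since `φ` stays in
`[0, Ω] ⊆ [0, π]`. Its value is `1` at `A` and `cos Ω + K b₂` at `B`, so
`K ≥ (1 - cos Ω) / b₂ = 2(√2 + 1)`. In the case of equality it is constant, so
`cos φ = 1 - K y`; wherever `φ > 0` this forces `φ' = K`. Hence `φ` vanishes up to some `T` and is
linear with slope `K` afterwards, and `φ(L) = Ω`, `x(L) = b₁` determine `T` and `L`.
-/

open Real

/-- `φ` is `K`-Lipschitz on `[0, L]`. -/
def LipOn (φ : ℝ → ℝ) (L K : ℝ) : Prop :=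
  ∀ s ∈ Set.Icc (0:ℝ) L, ∀ t ∈ Set.Icc (0:ℝ) L, |φ s - φ t| ≤ K * |s - t|

/-- The maximal curvature of the curve `(L, φ)`: the least Lipschitz constant of `φ`
(essential supremum of `φ'`) on `[0, L]`. -/
noncomputable def maxCurv (φ : ℝ → ℝ) (L : ℝ) : ℝ :=
  sInf {K : ℝ | 0 ≤ K ∧ LipOn φ L K}

/-- An admissible curve for the data `(Ω, b₁, b₂)` : a pair `(L, φ)` with `L > 0`,
`φ` nondecreasing and Lipschitz on `[0, L]`, `φ 0 = 0`, `φ L = Ω`,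
`∫₀^L cos (φ s) ds = b₁` and `∫₀^L sin (φ s) ds = b₂`. -/
def Admissible (Ω b₁ b₂ L : ℝ) (φ : ℝ → ℝ) : Prop :=
  0 < L ∧ MonotoneOn φ (Set.Icc 0 L) ∧ (∃ K : ℝ, 0 ≤ K ∧ LipOn φ L K) ∧
  φ 0 = 0 ∧ φ L = Ω ∧
  (∫ s in (0:ℝ)..L, Real.cos (φ s)) = b₁ ∧
  (∫ s in (0:ℝ)..L, Real.sin (φ s)) = b₂

/-- First coordinate of the associated plane curve. -/
noncomputable def xcoord (φ : ℝ → ℝ) (s : ℝ) : ℝ := ∫ t in (0:ℝ)..s, Real.cos (φ t)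

/-- Second coordinate of the associated plane curve. -/
noncomputable def ycoord (φ : ℝ → ℝ) (s : ℝ) : ℝ := ∫ t in (0:ℝ)..s, Real.sin (φ t)


open Set Filter Topology

theorem monotoneOn_of_sub_le_mul_sq {f : ℝ → ℝ} {s : Set ℝ} {C : ℝ} (hs : s.OrdConnected)
    (h : ∀ p ∈ s, ∀ q ∈ s, p ≤ q → f p - f q ≤ C * (q - p) ^ 2) : MonotoneOn f s := by
  have halve : ∀ k : ℕ, ∀ p ∈ s, ∀ q ∈ s, p ≤ q → f p - f q ≤ C * (q - p) ^ 2 / 2 ^ k := by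
    intro k
    induction k with
    | zero => simpa using h
    | succ k ih =>
      intro p hp q hq hpq
      have hm : (p + q) / 2 ∈ s := hs.out hp hq ⟨by linarith, by linarith⟩
      calc f p - f q = (f p - f ((p + q) / 2)) + (f ((p + q) / 2) - f q) := by ring
        _ ≤ C * ((p + q) / 2 - p) ^ 2 / 2 ^ k + C * (q - (p + q) / 2) ^ 2 / 2 ^ k :=
          add_le_add (ih p hp _ hm (by linarith)) (ih _ hm q hq (by linarith))
        _ = C * (q - p) ^ 2 / 2 ^ (k + 1) := by ring
  intro p hp q hq hpq
  have hlim : Tendsto (fun k : ℕ => C * (q - p) ^ 2 / 2 ^ k) atTop (𝓝 0) :=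
    tendsto_const_nhds.div_atTop (tendsto_pow_atTop_atTop_of_one_lt one_lt_two)
  exact sub_nonpos.mp (ge_of_tendsto' hlim fun k => halve k p hp q hq hpq)

theorem integral_add_mul_sub (a b c k : ℝ) :
    ∫ x in a..b, (c + k * (x - a)) = c * (b - a) + k * (b - a) ^ 2 / 2 := by
  rw [intervalIntegral.integral_add, intervalIntegral.integral_const_mul,
    intervalIntegral.integral_comp_sub_right (fun x => x)]
  · simp only [integral_id, intervalIntegral.integral_const, smul_eq_mul]; ring
  all_goals exact Continuous.intervalIntegrable (by fun_prop) _ _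

theorem Real.cos_sub_cos_le {a b : ℝ} (hab : a ≤ b) :
    cos a - cos b ≤ (b - a) * sin a + (b - a) ^ 2 / 2 := by
  have hsin : ∀ x ∈ Icc a b, sin x ≤ sin a + 1 * (x - a) := fun x hx => by
    have := (abs_le.mp (abs_sin_sub_sin_le x a)).2
    linarith [abs_of_nonneg (sub_nonneg.mpr hx.1)]
  calc cos a - cos b = ∫ x in a..b, sin x := integral_sin.symm
    _ ≤ ∫ x in a..b, (sin a + 1 * (x - a)) :=
      intervalIntegral.integral_mono_on hab (continuous_sin.intervalIntegrable _ _)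
        (Continuous.intervalIntegrable (by fun_prop) _ _) hsin
    _ = (b - a) * sin a + (b - a) ^ 2 / 2 := by rw [integral_add_mul_sub]; ring

namespace LipOn

variable {φ : ℝ → ℝ} {L K : ℝ}

theorem continuousOn (hK : 0 ≤ K) (hlip : LipOn φ L K) : ContinuousOn φ (Icc 0 L) := by
  refine (LipschitzOnWith.of_dist_le_mul (K := K.toNNReal) fun x hx y hy => ?_).continuousOn
  rw [Real.coe_toNNReal K hK, Real.dist_eq, Real.dist_eq]
  exact hlip x hx y hy

theorem intervalIntegrable_comp (hK : 0 ≤ K) (hlip : LipOn φ L K) {f : ℝ → ℝ}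
    (hf : Continuous f) {p q : ℝ} (hp : p ∈ Icc 0 L) (hq : q ∈ Icc 0 L) :
    IntervalIntegrable (fun u => f (φ u)) MeasureTheory.volume p q :=
  (hf.comp_continuousOn ((hlip.continuousOn hK).mono (uIcc_subset_Icc hp hq))).intervalIntegrable

theorem cos_sub_cos_le (hK : 0 ≤ K) (hlip : LipOn φ L K) (hmon : MonotoneOn φ (Icc 0 L))
    (hsin : ∀ u ∈ Icc 0 L, 0 ≤ sin (φ u)) {s t : ℝ} (hs : s ∈ Icc 0 L) (ht : t ∈ Icc 0 L)
    (hst : s ≤ t) :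
    cos (φ s) - cos (φ t) ≤ K * (∫ u in s..t, sin (φ u)) + K ^ 2 * (t - s) ^ 2 := by
  have hturn : φ t - φ s ≤ K * (t - s) := by
    simpa [abs_of_nonneg (sub_nonneg.mpr (hmon hs ht hst)), abs_of_nonneg (sub_nonneg.mpr hst)]
      using hlip t ht s hs
  have hsin_ge : ∀ u ∈ Icc s t, sin (φ s) + -K * (u - s) ≤ sin (φ u) := fun u hu => by
    have hu' : u ∈ Icc 0 L := ⟨hs.1.trans hu.1, hu.2.trans ht.2⟩
    have h := (Real.abs_sin_sub_sin_le _ _).trans (hlip u hu' s hs)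
    rw [abs_of_nonneg (sub_nonneg.mpr hu.1)] at h
    linarith [(abs_le.mp h).1]
  have hint : sin (φ s) * (t - s) + -K * (t - s) ^ 2 / 2 ≤ ∫ u in s..t, sin (φ u) := by
    rw [← integral_add_mul_sub]
    exact intervalIntegral.integral_mono_on hst (Continuous.intervalIntegrable (by fun_prop) _ _)
      (hlip.intervalIntegrable_comp hK continuous_sin hs ht) hsin_ge
  have hcos := Real.cos_sub_cos_le (hmon hs ht hst)
  nlinarith [mul_le_mul_of_nonneg_left hint hK, mul_le_mul_of_nonneg_left hturn (hsin s hs),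
    sq_nonneg (φ t - φ s), sub_nonneg.mpr (hmon hs ht hst)]

/- `φ` need not be differentiable; instead, the defect of order `(q - p)²` in `cos_sub_cos_le`
disappears when summed over finer and finer subdivisions. -/
theorem monotoneOn_cos_add_mul_integral_sin (hK : 0 ≤ K) (hlip : LipOn φ L K)
    (hmon : MonotoneOn φ (Icc 0 L)) (hsin : ∀ u ∈ Icc 0 L, 0 ≤ sin (φ u)) :
    MonotoneOn (fun s => cos (φ s) + K * ∫ u in (0)..s, sin (φ u)) (Icc 0 L) := by
  refine monotoneOn_of_sub_le_mul_sq (C := K ^ 2) ordConnected_Icc fun p hp q hq hpq => ?_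
  have h0 : (0 : ℝ) ∈ Icc 0 L := ⟨le_rfl, hp.1.trans hp.2⟩
  have hsplit := intervalIntegral.integral_add_adjacent_intervals
    (hlip.intervalIntegrable_comp hK continuous_sin h0 hp)
    (hlip.intervalIntegrable_comp hK continuous_sin hp hq)
  have := hlip.cos_sub_cos_le hK hmon hsin hp hq hpq
  simp only [← hsplit]
  linarith

end LipOn

theorem lipOn_maxCurv {φ : ℝ → ℝ} {L K : ℝ} (hK : 0 ≤ K) (hlip : LipOn φ L K) :
    LipOn φ L (maxCurv φ L) := by
  intro s hs t ht
  rcases eq_or_ne s t with rfl | hst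
  · simp
  have hpos : 0 < |s - t| := abs_pos.mpr (sub_ne_zero.mpr hst)
  rw [← div_le_iff₀ hpos]
  refine le_csInf ⟨K, hK, hlip⟩ fun K' hK' => ?_
  rw [div_le_iff₀ hpos]
  exact hK'.2 s hs t ht

theorem maxCurv_nonneg (φ : ℝ → ℝ) (L : ℝ) : 0 ≤ maxCurv φ L :=
  Real.sInf_nonneg fun _ hK => hK.1

theorem hasDerivAt_of_hasDerivAt_cos_comp {φ : ℝ → ℝ} {s k : ℝ} (hc : ContinuousAt φ s)
    (hs : φ s ∈ Ioo 0 π) (hd : HasDerivAt (fun u => cos (φ u)) (-sin (φ s) * k) s) :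
    HasDerivAt φ k s := by
  have hsin : 0 < sin (φ s) := sin_pos_of_pos_of_lt_pi hs.1 hs.2
  have hsq : 1 - cos (φ s) ^ 2 = sin (φ s) ^ 2 := (sin_sq _).symm
  have hcos : cos (φ s) ^ 2 ≠ 1 := fun h => by nlinarith
  have harccos := (hasDerivAt_arccos (fun h => hcos (by rw [h]; norm_num))
    (fun h => hcos (by rw [h]; norm_num))).comp s hd
  rw [hsq, sqrt_sq hsin.le] at harccos
  refine (harccos.congr_deriv (by field_simp)).congr_of_eventuallyEq ?_
  filter_upwards [hc.eventually (isOpen_Ioo.mem_nhds hs)] with u hu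
  exact (arccos_cos hu.1.le hu.2.le).symm

theorem hasDerivAt_of_cos_add_mul_integral_sin_eq {φ : ℝ → ℝ} {L K c s : ℝ}
    (hc : ContinuousOn φ (Icc 0 L))
    (hφ : ∀ t ∈ Icc 0 L, cos (φ t) + K * ∫ u in (0)..t, sin (φ u) = c) (hs : s ∈ Ioo 0 L)
    (hφs : φ s ∈ Ioo 0 π) : HasDerivAt φ K s := by
  have hnhds : Icc 0 L ∈ 𝓝 s := Icc_mem_nhds hs.1 hs.2
  have hsinφ : ContinuousOn (fun u => sin (φ u)) (Icc 0 L) := continuous_sin.comp_continuousOn hc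
  have hY : HasDerivAt (fun t => ∫ u in (0)..t, sin (φ u)) (sin (φ s)) s :=
    intervalIntegral.integral_hasDerivAt_right
      (hsinφ.mono (uIcc_subset_Icc ⟨le_rfl, hs.1.le.trans hs.2.le⟩
        (Ioo_subset_Icc_self hs))).intervalIntegrable
      ((hsinφ.mono Ioo_subset_Icc_self).stronglyMeasurableAtFilter isOpen_Ioo s hs)
      (hsinφ.continuousAt hnhds)
  refine hasDerivAt_of_hasDerivAt_cos_comp (hc.continuousAt hnhds) hφs ?_
  refine (((hY.const_mul K).const_sub c).congr_deriv (by ring)).congr_of_eventuallyEq ?_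
  filter_upwards [hnhds] with t ht
  linarith [hφ t ht]

/-- Tangent angle of a segment of length `T` followed by a circular arc of radius `R`. -/
noncomputable def segmentArcAngle (T R s : ℝ) : ℝ := max (s - T) 0 / R

section segmentArcAngle

variable {T R L : ℝ}

theorem segmentArcAngle_of_le {s : ℝ} (hs : s ≤ T) : segmentArcAngle T R s = 0 := by
  rw [segmentArcAngle, max_eq_right (by linarith), zero_div]

theorem segmentArcAngle_of_ge {s : ℝ} (hs : T ≤ s) : segmentArcAngle T R s = (s - T) / R := by
  rw [segmentArcAngle, max_eq_left (by linarith)]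

theorem continuous_segmentArcAngle : Continuous (segmentArcAngle T R) := by
  unfold segmentArcAngle; fun_prop

theorem monotone_segmentArcAngle (hR : 0 ≤ R) : Monotone (segmentArcAngle T R) :=
  fun _ _ hst => div_le_div_of_nonneg_right (max_le_max (by linarith) le_rfl) hR

theorem lipOn_segmentArcAngle (hR : 0 < R) : LipOn (segmentArcAngle T R) L (1 / R) := by
  intro s _ t _
  rw [segmentArcAngle, segmentArcAngle, ← sub_div, abs_div, abs_of_pos hR, div_eq_inv_mul,
    one_div]
  have h := abs_max_sub_max_le_abs (s - T) (t - T) 0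
  rw [sub_sub_sub_cancel_right] at h
  exact mul_le_mul_of_nonneg_left h (inv_nonneg.mpr hR.le)

theorem maxCurv_segmentArcAngle (hT : 0 ≤ T) (hTL : T < L) (hR : 0 < R) :
    maxCurv (segmentArcAngle T R) L = 1 / R := by
  refine IsLeast.csInf_eq ⟨⟨by positivity, lipOn_segmentArcAngle hR⟩, fun K ⟨_, hK⟩ => ?_⟩
  have h := hK L ⟨hT.trans hTL.le, le_rfl⟩ T ⟨hT, hTL.le⟩
  rw [segmentArcAngle_of_ge hTL.le, segmentArcAngle_of_le le_rfl, sub_zero, abs_div,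
    abs_of_pos hR, abs_of_pos (sub_pos.mpr hTL), div_le_iff₀ hR] at h
  rw [div_le_iff₀ hR]
  nlinarith

theorem integral_comp_segmentArcAngle {f : ℝ → ℝ} (hf : Continuous f) (hT : 0 ≤ T)
    (hTL : T ≤ L) (hR : R ≠ 0) :
    ∫ s in (0)..L, f (segmentArcAngle T R s) = T * f 0 + R * ∫ x in (0)..(L - T) / R, f x := by
  have hint (a b : ℝ) :
      IntervalIntegrable (fun s => f (segmentArcAngle T R s)) MeasureTheory.volume a b :=
    (hf.comp continuous_segmentArcAngle).intervalIntegrable _ _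
  have hsegment : ∫ s in (0)..T, f (segmentArcAngle T R s) = ∫ _ in (0)..T, f 0 :=
    intervalIntegral.integral_congr fun s hs => by
      rw [uIcc_of_le hT] at hs; simp only [segmentArcAngle_of_le hs.2]
  have harc : ∫ s in T..L, f (segmentArcAngle T R s) = ∫ s in T..L, f ((s - T) / R) :=
    intervalIntegral.integral_congr fun s hs => by
      rw [uIcc_of_le hTL] at hs; simp only [segmentArcAngle_of_ge hs.1]
  rw [← intervalIntegral.integral_add_adjacent_intervals (hint 0 T) (hint T L), hsegment, harc,
    intervalIntegral.integral_comp_sub_right (fun x => f (x / R)),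
    intervalIntegral.integral_comp_div (fun x => f x) hR]
  simp

theorem admissible_segmentArcAngle {Ω : ℝ} (hT : 0 ≤ T) (hR : 0 < R) (hΩ : 0 < Ω) :
    Admissible Ω (T + R * sin Ω) (R * (1 - cos Ω)) (T + Ω * R) (segmentArcAngle T R) := by
  have hTL : T ≤ T + Ω * R := by nlinarith
  have hΩR : (T + Ω * R - T) / R = Ω := by field_simp; ring
  refine ⟨by positivity, (monotone_segmentArcAngle hR.le).monotoneOn _,
    ⟨1 / R, by positivity, lipOn_segmentArcAngle hR⟩, segmentArcAngle_of_le hT, ?_, ?_, ?_⟩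
  · rw [segmentArcAngle_of_ge hTL, hΩR]
  · rw [integral_comp_segmentArcAngle continuous_cos hT hTL hR.ne', hΩR, integral_cos]
    simp
  · rw [integral_comp_segmentArcAngle continuous_sin hT hTL hR.ne', hΩR, integral_sin]
    simp

theorem eq_segmentArcAngle_of_hasDerivAt {φ : ℝ → ℝ} (hL : 0 ≤ L)
    (hc : ContinuousOn φ (Icc 0 L)) (hmon : MonotoneOn φ (Icc 0 L)) (h0 : φ 0 = 0)
    (hd : ∀ s ∈ Ioo 0 L, 0 < φ s → HasDerivAt φ (1 / R) s) :
    ∃ T ∈ Icc 0 L, ∀ s ∈ Icc 0 L, φ s = segmentArcAngle T R s := by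
  set Z := Icc 0 L ∩ φ ⁻¹' {0}
  have hZ : IsClosed Z := hc.preimage_isClosed_of_isClosed isClosed_Icc isClosed_singleton
  have hbdd : BddAbove Z := ⟨L, fun x hx => hx.1.2⟩
  obtain ⟨hT, hφT : φ (sSup Z) = 0⟩ : sSup Z ∈ Z := hZ.csSup_mem ⟨0, ⟨le_rfl, hL⟩, h0⟩ hbdd
  have hnonneg : ∀ s ∈ Icc 0 L, 0 ≤ φ s := fun s hs => h0 ▸ hmon ⟨le_rfl, hL⟩ hs hs.1
  have hpos : ∀ s ∈ Icc 0 L, sSup Z < s → 0 < φ s := fun s hs hTs =>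
    (hnonneg s hs).lt_of_ne fun h => (le_csSup hbdd ⟨hs, h.symm⟩).not_gt hTs
  refine ⟨sSup Z, hT, fun s hs => ?_⟩
  rcases le_or_gt s (sSup Z) with hsT | hTs
  · rw [segmentArcAngle_of_le hsT]
    exact le_antisymm (hφT ▸ hmon hs hT hsT) (hnonneg s hs)
  obtain ⟨c, -, hslope⟩ := exists_hasDerivAt_eq_slope φ (fun _ => 1 / R) hTs
    (hc.mono (Icc_subset_Icc hT.1 hs.2)) fun u hu => hd u ⟨hT.1.trans_lt hu.1, hu.2.trans_le hs.2⟩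
      (hpos u ⟨hT.1.trans hu.1.le, hu.2.le.trans hs.2⟩ hu.1)
  rw [hφT, eq_div_iff (sub_ne_zero.mpr hTs.ne')] at hslope
  rw [segmentArcAngle_of_ge hTs.le, div_eq_mul_one_div, mul_comm]
  linarith

end segmentArcAngle

namespace Admissible

variable {Ω b₁ b₂ L : ℝ} {φ : ℝ → ℝ}

theorem mem_Icc (h : Admissible Ω b₁ b₂ L φ) {s : ℝ} (hs : s ∈ Icc 0 L) : φ s ∈ Icc 0 Ω := by
  obtain ⟨hL, hmon, -, h0, hφL, -⟩ := h
  exact ⟨h0 ▸ hmon ⟨le_rfl, hL.le⟩ hs hs.1, hφL ▸ hmon hs ⟨hL.le, le_rfl⟩ hs.2⟩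

theorem sin_nonneg (h : Admissible Ω b₁ b₂ L φ) (hΩ : Ω ≤ π) {s : ℝ} (hs : s ∈ Icc 0 L) :
    0 ≤ sin (φ s) :=
  sin_nonneg_of_nonneg_of_le_pi (h.mem_Icc hs).1 ((h.mem_Icc hs).2.trans hΩ)

theorem one_sub_cos_le {K : ℝ} (h : Admissible Ω b₁ b₂ L φ) (hΩ : Ω ≤ π) (hK : 0 ≤ K)
    (hlip : LipOn φ L K) : 1 - cos Ω ≤ K * b₂ := by
  have hsin : ∀ u ∈ Icc 0 L, 0 ≤ sin (φ u) := fun u hu => h.sin_nonneg hΩ hu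
  obtain ⟨hL, hmon, -, h0, hφL, -, hb₂⟩ := h
  have := hlip.monotoneOn_cos_add_mul_integral_sin hK hmon hsin
    ⟨le_rfl, hL.le⟩ ⟨hL.le, le_rfl⟩ hL.le
  simp only [h0, hφL, hb₂, cos_zero, intervalIntegral.integral_same, mul_zero, add_zero] at this
  linarith

theorem one_div_le_maxCurv {R : ℝ} (h : Admissible Ω b₁ (R * (1 - cos Ω)) L φ) (hΩ₀ : 0 < Ω)
    (hΩ : Ω ≤ π) : 1 / R ≤ maxCurv φ L := by
  obtain ⟨K, hK, hlip⟩ := h.2.2.1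
  have hcos : 0 < 1 - cos Ω := by
    linarith [cos_zero ▸ cos_lt_cos_of_nonneg_of_le_pi le_rfl hΩ hΩ₀]
  have := h.one_sub_cos_le hΩ (maxCurv_nonneg φ L) (lipOn_maxCurv hK hlip)
  have hR : 1 ≤ maxCurv φ L * R := by nlinarith
  rwa [div_le_iff₀ (by nlinarith [maxCurv_nonneg φ L])]

theorem cos_add_mul_integral_sin_eq_one {K : ℝ} (h : Admissible Ω b₁ b₂ L φ) (hΩ : Ω ≤ π)
    (hK : 0 ≤ K) (hlip : LipOn φ L K) (hb₂ : K * b₂ = 1 - cos Ω) :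
    ∀ s ∈ Icc 0 L, cos (φ s) + K * ∫ u in (0)..s, sin (φ u) = 1 := by
  have hsin : ∀ u ∈ Icc 0 L, 0 ≤ sin (φ u) := fun u hu => h.sin_nonneg hΩ hu
  obtain ⟨hL, hmon, -, h0, hφL, -, hY⟩ := h
  have hmono := hlip.monotoneOn_cos_add_mul_integral_sin hK hmon hsin
  intro s hs
  have h1 := hmono ⟨le_rfl, hL.le⟩ hs hs.1
  have h2 := hmono hs ⟨hL.le, le_rfl⟩ hs.2
  simp only [h0, hφL, hY, cos_zero, intervalIntegral.integral_same, mul_zero, add_zero] at h1 h2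
  linarith

theorem eq_segmentArcAngle {T R : ℝ}
    (h : Admissible Ω (T + R * sin Ω) (R * (1 - cos Ω)) L φ) (hΩ : Ω < π) (hR : 0 < R)
    (hlip : LipOn φ L (1 / R)) :
    L = T + Ω * R ∧ ∀ s ∈ Icc 0 L, φ s = segmentArcAngle T R s := by
  have hK : 0 ≤ 1 / R := by positivity
  have hc := hlip.continuousOn hK
  have hconst := h.cos_add_mul_integral_sin_eq_one hΩ.le hK hlip (by field_simp)
  have hrange : ∀ s ∈ Icc 0 L, φ s ∈ Icc 0 Ω := fun s hs => h.mem_Icc hs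
  obtain ⟨hL, hmon, -, h0, hφL, hb₁, -⟩ := h
  obtain ⟨T', hT', hφ⟩ := eq_segmentArcAngle_of_hasDerivAt hL.le hc hmon h0 fun s hs hpos =>
    hasDerivAt_of_cos_add_mul_integral_sin_eq hc hconst hs
      ⟨hpos, (hrange s (Ioo_subset_Icc_self hs)).2.trans_lt hΩ⟩
  have hturn : (L - T') / R = Ω := by
    rw [← hφL, hφ L ⟨hL.le, le_rfl⟩, segmentArcAngle_of_ge hT'.2]
  have hT : T' = T := by
    rw [intervalIntegral.integral_congr fun s hs => congrArg cos (hφ s (uIcc_of_le hL.le ▸ hs)),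
      integral_comp_segmentArcAngle continuous_cos hT'.1 hT'.2 hR.ne', hturn, integral_cos] at hb₁
    simpa using hb₁
  subst hT
  exact ⟨by field_simp at hturn; linarith, hφ⟩

end Admissible

/-- For `Ω = 3π/4` and `B = (√2/4, √2/4)`, the segment-then-arc curve with
`R = d = (√2 − 1)/2` is admissible, its maximal curvature `1/R = 2(√2 + 1)` is the
minimum of the maximal curvature over all admissible curves, and it is the unique
admissible curve attaining this minimum. -/
theorem stmt14 :
    Admissible (3 * Real.pi / 4) (Real.sqrt 2 / 4) (Real.sqrt 2 / 4)
      ((Real.sqrt 2 - 1) / 2 + (3 * Real.pi / 4) * ((Real.sqrt 2 - 1) / 2))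
      (fun s => max (s - (Real.sqrt 2 - 1) / 2) 0 / ((Real.sqrt 2 - 1) / 2)) ∧
    maxCurv (fun s => max (s - (Real.sqrt 2 - 1) / 2) 0 / ((Real.sqrt 2 - 1) / 2))
      ((Real.sqrt 2 - 1) / 2 + (3 * Real.pi / 4) * ((Real.sqrt 2 - 1) / 2))
      = 1 / ((Real.sqrt 2 - 1) / 2) ∧
    1 / ((Real.sqrt 2 - 1) / 2) = 2 * (Real.sqrt 2 + 1) ∧
    IsLeast {e : ℝ | ∃ L : ℝ, ∃ φ : ℝ → ℝ,
        Admissible (3 * Real.pi / 4) (Real.sqrt 2 / 4) (Real.sqrt 2 / 4) L φ ∧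
        maxCurv φ L = e}
      (1 / ((Real.sqrt 2 - 1) / 2)) ∧
    (∀ L : ℝ, ∀ φ : ℝ → ℝ,
      Admissible (3 * Real.pi / 4) (Real.sqrt 2 / 4) (Real.sqrt 2 / 4) L φ →
      maxCurv φ L = 1 / ((Real.sqrt 2 - 1) / 2) →
      L = (Real.sqrt 2 - 1) / 2 + (3 * Real.pi / 4) * ((Real.sqrt 2 - 1) / 2) ∧
      ∀ s ∈ Set.Icc (0:ℝ) L,
        φ s = max (s - (Real.sqrt 2 - 1) / 2) 0 / ((Real.sqrt 2 - 1) / 2)) := by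
  set d := (√2 - 1) / 2
  have hsqrt : √2 ^ 2 = 2 := sq_sqrt zero_le_two
  have hd : 0 < d := by have := one_lt_sqrt_two; simp only [d]; linarith
  have hΩ : 3 * π / 4 = π - π / 4 := by ring
  have hb₁ : √2 / 4 = d + d * sin (3 * π / 4) := by
    rw [hΩ, sin_pi_sub, sin_pi_div_four]; simp only [d]; nlinarith
  have hb₂ : √2 / 4 = d * (1 - cos (3 * π / 4)) := by
    rw [hΩ, cos_pi_sub, cos_pi_div_four]; simp only [d]; nlinarith
  have hdata : ∀ {L φ}, Admissible (3 * π / 4) (√2 / 4) (√2 / 4) L φ ↔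
      Admissible (3 * π / 4) (d + d * sin (3 * π / 4)) (d * (1 - cos (3 * π / 4))) L φ := by
    rw [← hb₁, ← hb₂]
  have hΩπ : 3 * π / 4 < π := by linarith [pi_pos]
  have hadm := hdata.mpr (admissible_segmentArcAngle hd.le hd (by positivity))
  have hmin := maxCurv_segmentArcAngle (L := d + 3 * π / 4 * d) hd.le
    (lt_add_of_pos_right _ (by positivity)) hd
  refine ⟨hadm, hmin, ?_, ⟨⟨_, _, hadm, hmin⟩, ?_⟩, ?_⟩
  · field_simp; simp only [d]; nlinarith
  · rintro _ ⟨L, φ, h, rfl⟩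
    exact (hdata.mp h).one_div_le_maxCurv (by positivity) hΩπ.le
  · intro L φ h hmc
    obtain ⟨K, hK, hlip⟩ := h.2.2.1
    exact (hdata.mp h).eq_segmentArcAngle hΩπ hd (hmc ▸ lipOn_maxCurv hK hlip)
end

section
/- Suppose there exist u₀ > 0 and v₀ > 0 with (b₁, b₂) = u₀·(1, 0) + v₀·(cos Ω, sin Ω), and let R_a be the radius of the unique admissible curve that is a concatenation of one circular arc (of angle Ω) and one line segment. Then for every R ∈ (0, R_a] there exist angles θ₁, θ₂ ≥ 0 with θ₁ + θ₂ = Ω and a length d ≥ 0 such that the pair (L, φ) with L = R·θ₁ + d + R·θ₂ and φ(s) = s/R on [0, R·θ₁], φ(s) = θ₁ on [R·θ₁, R·θ₁ + d], φ(s) = θ₁ + (s − R·θ₁ − d)/R on [R·θ₁ + d, L] is admissible: the concatenation of a circular arc of radius R, a line segment, and a circular arc of radius R (each possibly degenerate), whose maximal curvature is 1/R. For R = R_a one may take θ₁ = 0 or θ₂ = 0, recovering the arc-plus-segment curve. -/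
open Real

/-- The curve `(L, φ)` is an arc of radius `R` and angle `Ω` followed by a
line segment of length `d` (arc at the `A`-end). -/
def ArcThenSeg (Ω R d L : ℝ) (φ : ℝ → ℝ) : Prop :=
  L = R * Ω + d ∧ ∀ s ∈ Set.Icc (0:ℝ) L, φ s = min s (R * Ω) / R

/-- The curve `(L, φ)` is a line segment of length `d` followed by an arc of
radius `R` and angle `Ω` (arc at the `B`-end). -/
def SegThenArc (Ω R d L : ℝ) (φ : ℝ → ℝ) : Prop :=
  L = R * Ω + d ∧ ∀ s ∈ Set.Icc (0:ℝ) L, φ s = max (s - d) 0 / R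

/-- The curve `(L, φ)` is the concatenation of one circular arc (radius `R`, angle `Ω`)
and one line segment (length `d`), in either order. -/
def ArcSeg (Ω R d L : ℝ) (φ : ℝ → ℝ) : Prop :=
  ArcThenSeg Ω R d L φ ∨ SegThenArc Ω R d L φ

/-!
An arc–segment–arc curve of radius `R` with arcs of angles `θ₁` and `Ω - θ₁` and a segment of
length `d` ends at `R • (sin Ω, 1 - cos Ω) + d • (cos θ₁, sin θ₁)`. The given curve of radius `R_a`
shows that `B = R_a • (sin Ω, 1 - cos Ω) + d_J • (cos θ, sin θ)` with `θ ∈ [0, Ω]`. For `R ≤ R_a`,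
`B - R • (sin Ω, 1 - cos Ω) = (R_a - R) • (sin Ω, 1 - cos Ω) + d_J • (cos θ, sin θ)` lies in the
cone of directions `[0, Ω]`, since `(sin Ω, 1 - cos Ω)` has direction `Ω / 2`; its polar
coordinates are the required `d` and `θ₁`.
-/

open Set

/-- `min (max (s - a) 0) d` is the length travelled before `s` on the segment, which has length `d`
and starts at arc length `a`; the rest is spent on arcs of radius `R`. -/
noncomputable def dubinsAngle (R a d s : ℝ) : ℝ := (s - min (max (s - a) 0) d) / R

lemma LipOn.le_of_sub_eq {φ : ℝ → ℝ} {L K c s t : ℝ} (hφ : LipOn φ L K)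
    (hs : s ∈ Icc 0 L) (ht : t ∈ Icc 0 L) (hst : s < t) (heq : φ t - φ s = c * (t - s)) :
    c ≤ K := by
  have h := hφ t ht s hs
  rw [heq, abs_of_pos (sub_pos.2 hst)] at h
  exact le_of_mul_le_mul_right ((le_abs_self _).trans h) (sub_pos.2 hst)

lemma Admissible.congr {Ω b₁ b₂ L : ℝ} {φ ψ : ℝ → ℝ} (h : Admissible Ω b₁ b₂ L φ)
    (hφψ : EqOn φ ψ (Icc 0 L)) : Admissible Ω b₁ b₂ L ψ := by
  obtain ⟨hL, hmono, ⟨K, hK, hlip⟩, h0, hΩ, hcos, hsin⟩ := h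
  have h0L : (0 : ℝ) ∈ Icc 0 L := ⟨le_rfl, hL.le⟩
  have hLL : L ∈ Icc 0 L := ⟨hL.le, le_rfl⟩
  have hint : EqOn φ ψ (uIcc 0 L) := by rwa [uIcc_of_le hL.le]
  refine ⟨hL, hmono.congr hφψ, ⟨K, hK, fun s hs t ht => ?_⟩, hφψ h0L ▸ h0, hφψ hLL ▸ hΩ,
    ?_, ?_⟩
  · rw [← hφψ hs, ← hφψ ht]; exact hlip s hs t ht
  · rw [← hcos]; exact intervalIntegral.integral_congr fun s hs => by simp [hint hs]
  · rw [← hsin]; exact intervalIntegral.integral_congr fun s hs => by simp [hint hs]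

section dubinsAngle

variable {R a d : ℝ}

lemma clamp_sub_clamp_le {s t : ℝ} (hst : s ≤ t) :
    min (max (t - a) 0) d - min (max (s - a) 0) d ≤ t - s := by
  have h : max (t - a) 0 ≤ max (s - a) 0 + (t - s) :=
    max_le (by linarith [le_max_left (s - a) 0]) (by linarith [le_max_right (s - a) 0])
  rcases le_total (max (s - a) 0) d with hc | hc
  · rw [min_eq_left hc]; linarith [min_le_left (max (t - a) 0) d]
  · rw [min_eq_right hc]; linarith [min_le_right (max (t - a) 0) d]

lemma dubinsAngle_mono (hR : 0 < R) : Monotone (dubinsAngle R a d) := fun s t hst =>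
  div_le_div_of_nonneg_right (by linarith [clamp_sub_clamp_le (a := a) (d := d) hst]) hR.le

lemma abs_dubinsAngle_sub_le (hR : 0 < R) (s t : ℝ) :
    |dubinsAngle R a d s - dubinsAngle R a d t| ≤ 1 / R * |s - t| := by
  wlog hts : t ≤ s generalizing s t
  · rw [abs_sub_comm, abs_sub_comm s t]; exact this t s (le_of_not_ge hts)
  have hclamp : 0 ≤ min (max (s - a) 0) d - min (max (t - a) 0) d :=
    sub_nonneg.2 (min_le_min_right d (max_le_max_right 0 (by linarith)))
  rw [abs_of_nonneg (sub_nonneg.2 (dubinsAngle_mono hR hts)), abs_of_nonneg (sub_nonneg.2 hts),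
    dubinsAngle, dubinsAngle, div_sub_div_same, one_div_mul_eq_div]
  exact div_le_div_of_nonneg_right (by linarith) hR.le

lemma lipOn_dubinsAngle (hR : 0 < R) (L : ℝ) : LipOn (dubinsAngle R a d) L (1 / R) :=
  fun s _ t _ => abs_dubinsAngle_sub_le hR s t

lemma continuous_dubinsAngle : Continuous (dubinsAngle R a d) := by
  unfold dubinsAngle; fun_prop

lemma dubinsAngle_of_le (hd : 0 ≤ d) {s : ℝ} (hs : s ≤ a) : dubinsAngle R a d s = s / R := by
  rw [dubinsAngle, max_eq_right (by linarith), min_eq_left hd, sub_zero]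

lemma dubinsAngle_of_mem_Icc {s : ℝ} (hs : s ∈ Icc a (a + d)) : dubinsAngle R a d s = a / R := by
  rw [dubinsAngle, max_eq_left (by linarith [hs.1]), min_eq_left (by linarith [hs.2]),
    sub_sub_cancel]

lemma dubinsAngle_of_add_le (hd : 0 ≤ d) {s : ℝ} (hs : a + d ≤ s) :
    dubinsAngle R a d s = (s - d) / R := by
  rw [dubinsAngle, max_eq_left (by linarith), min_eq_right (by linarith)]

end dubinsAngle

section arcSegmentArc

variable {R θ₁ θ₂ d : ℝ}

lemma integral_comp_dubinsAngle (hR : 0 < R) (h₁ : 0 ≤ θ₁) (h₂ : 0 ≤ θ₂) (hd : 0 ≤ d)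
    {f : ℝ → ℝ} (hf : Continuous f) :
    ∫ s in (0:ℝ)..R * θ₁ + d + R * θ₂, f (dubinsAngle R (R * θ₁) d s) =
      R * (∫ x in (0:ℝ)..θ₁, f x) + d * f θ₁ + R * ∫ x in θ₁..θ₁ + θ₂, f x := by
  have hR' : R ≠ 0 := hR.ne'
  have ha : 0 ≤ R * θ₁ := mul_nonneg hR.le h₁
  have hc : Continuous fun s => f (dubinsAngle R (R * θ₁) d s) := hf.comp continuous_dubinsAngle
  rw [← intervalIntegral.integral_add_adjacent_intervals (b := R * θ₁ + d)
      (hc.intervalIntegrable _ _) (hc.intervalIntegrable _ _),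
    ← intervalIntegral.integral_add_adjacent_intervals (b := R * θ₁)
      (hc.intervalIntegrable _ _) (hc.intervalIntegrable _ _)]
  have e₁ : ∫ s in (0:ℝ)..R * θ₁, f (dubinsAngle R (R * θ₁) d s) = R * ∫ x in (0:ℝ)..θ₁, f x := by
    rw [intervalIntegral.integral_congr (g := fun s => f (s / R)) fun s hs => by
        rw [uIcc_of_le ha] at hs; simp only [dubinsAngle_of_le hd hs.2],
      intervalIntegral.integral_comp_div f hR', zero_div, mul_div_cancel_left₀ _ hR', smul_eq_mul]
  have e₂ : ∫ s in R * θ₁..R * θ₁ + d, f (dubinsAngle R (R * θ₁) d s) = d * f θ₁ := by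
    rw [intervalIntegral.integral_congr (g := fun _ => f θ₁) fun s hs => by
        rw [uIcc_of_le (by linarith)] at hs
        simp only [dubinsAngle_of_mem_Icc hs, mul_div_cancel_left₀ _ hR'],
      intervalIntegral.integral_const, add_sub_cancel_left, smul_eq_mul]
  have e₃ : ∫ s in R * θ₁ + d..R * θ₁ + d + R * θ₂, f (dubinsAngle R (R * θ₁) d s) =
      R * ∫ x in θ₁..θ₁ + θ₂, f x := by
    rw [intervalIntegral.integral_congr (g := fun s => f ((s - d) / R)) fun s hs => by
        rw [uIcc_of_le (by nlinarith)] at hs; simp only [dubinsAngle_of_add_le hd hs.1],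
      intervalIntegral.integral_comp_sub_right (fun s => f (s / R)) d,
      intervalIntegral.integral_comp_div f hR', smul_eq_mul, add_sub_cancel_right,
      add_right_comm, add_sub_cancel_right, mul_div_cancel_left₀ _ hR', ← mul_add,
      mul_div_cancel_left₀ _ hR']
  rw [e₁, e₂, e₃]

lemma integral_cos_dubinsAngle (hR : 0 < R) (h₁ : 0 ≤ θ₁) (h₂ : 0 ≤ θ₂) (hd : 0 ≤ d) :
    ∫ s in (0:ℝ)..R * θ₁ + d + R * θ₂, cos (dubinsAngle R (R * θ₁) d s) =
      R * sin (θ₁ + θ₂) + d * cos θ₁ := by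
  rw [integral_comp_dubinsAngle hR h₁ h₂ hd continuous_cos, integral_cos, integral_cos, sin_zero]
  ring

lemma integral_sin_dubinsAngle (hR : 0 < R) (h₁ : 0 ≤ θ₁) (h₂ : 0 ≤ θ₂) (hd : 0 ≤ d) :
    ∫ s in (0:ℝ)..R * θ₁ + d + R * θ₂, sin (dubinsAngle R (R * θ₁) d s) =
      R * (1 - cos (θ₁ + θ₂)) + d * sin θ₁ := by
  rw [integral_comp_dubinsAngle hR h₁ h₂ hd continuous_sin, integral_sin, integral_sin, cos_zero]
  ring

/-- The curvature `1 / R` is attained on whichever of the two arcs is not degenerate. -/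
lemma maxCurv_dubinsAngle (hR : 0 < R) (h₁ : 0 ≤ θ₁) (h₂ : 0 ≤ θ₂) (hd : 0 ≤ d)
    (hθ : 0 < θ₁ + θ₂) :
    maxCurv (dubinsAngle R (R * θ₁) d) (R * θ₁ + d + R * θ₂) = 1 / R := by
  refine IsLeast.csInf_eq ⟨⟨by positivity, lipOn_dubinsAngle hR _⟩, fun K ⟨_, hK⟩ => ?_⟩
  rcases h₁.lt_or_eq with h₁ | rfl
  · refine hK.le_of_sub_eq (s := 0) (t := R * θ₁) ⟨le_rfl, by positivity⟩
      ⟨by positivity, by nlinarith⟩ (by positivity) ?_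
    rw [dubinsAngle_of_mem_Icc ⟨le_rfl, by linarith⟩,
      dubinsAngle_of_le hd (s := 0) (by positivity)]
    field_simp
  · rw [zero_add] at hθ
    refine hK.le_of_sub_eq (s := R * 0 + d) (t := R * 0 + d + R * θ₂) ⟨by simpa, by nlinarith⟩
      ⟨by positivity, le_rfl⟩ (by nlinarith) ?_
    rw [dubinsAngle_of_add_le hd (by nlinarith), dubinsAngle_of_mem_Icc ⟨by simpa, le_rfl⟩]
    field_simp
    ring

lemma exists_arcSegmentArc {Ω b₁ b₂ : ℝ} (hR : 0 < R) (h₁ : 0 ≤ θ₁) (h₂ : 0 ≤ θ₂)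
    (hθ : θ₁ + θ₂ = Ω) (hΩ : 0 < Ω) (hd : 0 ≤ d)
    (hb₁ : R * sin Ω + d * cos θ₁ = b₁) (hb₂ : R * (1 - cos Ω) + d * sin θ₁ = b₂) :
    ∃ φ : ℝ → ℝ,
      (∀ s ∈ Icc (0:ℝ) (R * θ₁), φ s = s / R) ∧
      (∀ s ∈ Icc (R * θ₁) (R * θ₁ + d), φ s = θ₁) ∧
      (∀ s ∈ Icc (R * θ₁ + d) (R * θ₁ + d + R * θ₂), φ s = θ₁ + (s - R * θ₁ - d) / R) ∧
      Admissible Ω b₁ b₂ (R * θ₁ + d + R * θ₂) φ ∧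
      maxCurv φ (R * θ₁ + d + R * θ₂) = 1 / R := by
  subst hθ
  refine ⟨dubinsAngle R (R * θ₁) d, fun s hs => dubinsAngle_of_le hd hs.2,
    fun s hs => by rw [dubinsAngle_of_mem_Icc hs]; field_simp,
    fun s hs => by rw [dubinsAngle_of_add_le hd hs.1]; field_simp; ring,
    ⟨by nlinarith, (dubinsAngle_mono hR).monotoneOn _, ⟨1 / R, by positivity,
      lipOn_dubinsAngle hR _⟩, by rw [dubinsAngle_of_le hd (by positivity), zero_div],
      by rw [dubinsAngle_of_add_le hd (by nlinarith)]; field_simp; ring,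
      by rw [integral_cos_dubinsAngle hR h₁ h₂ hd, hb₁],
      by rw [integral_sin_dubinsAngle hR h₁ h₂ hd, hb₂]⟩,
    maxCurv_dubinsAngle hR h₁ h₂ hd hΩ⟩

end arcSegmentArc

lemma ArcSeg.exists_eqOn_dubinsAngle {Ω R d L : ℝ} {φ : ℝ → ℝ} (h : ArcSeg Ω R d L φ)
    (hΩ : 0 ≤ Ω) (hd : 0 ≤ d) :
    ∃ θ₁ θ₂ : ℝ, 0 ≤ θ₁ ∧ 0 ≤ θ₂ ∧ θ₁ + θ₂ = Ω ∧ (θ₁ = 0 ∨ θ₂ = 0) ∧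
      L = R * θ₁ + d + R * θ₂ ∧ EqOn φ (dubinsAngle R (R * θ₁) d) (Icc 0 L) := by
  rcases h with ⟨rfl, hφ⟩ | ⟨rfl, hφ⟩
  · refine ⟨Ω, 0, hΩ, le_rfl, add_zero Ω, Or.inr rfl, by ring, fun s hs => ?_⟩
    rw [hφ s hs]
    rcases le_total s (R * Ω) with h | h
    · rw [dubinsAngle_of_le hd h, min_eq_left h]
    · rw [dubinsAngle_of_mem_Icc ⟨h, hs.2⟩, min_eq_right h]
  · refine ⟨0, Ω, le_rfl, hΩ, zero_add Ω, Or.inl rfl, by ring, fun s hs => ?_⟩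
    rw [hφ s hs, dubinsAngle, mul_zero, sub_zero, max_eq_left hs.1]
    rcases le_total s d with h | h
    · rw [min_eq_left h, max_eq_right (by linarith), sub_self, zero_div]
    · rw [min_eq_right h, max_eq_left (by linarith)]

lemma exists_polar_of_mem_cone {Ω X Y : ℝ} (hΩ : Ω ∈ Ioo 0 π) (hY : 0 ≤ Y)
    (hXY : 0 ≤ X * sin Ω - Y * cos Ω) :
    ∃ θ d : ℝ, 0 ≤ θ ∧ θ ≤ Ω ∧ 0 ≤ d ∧ d * cos θ = X ∧ d * sin θ = Y := by
  set z : ℂ := ⟨X, Y⟩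
  refine ⟨z.arg, ‖z‖, Complex.arg_nonneg_iff.2 hY, ?_, norm_nonneg z,
    Complex.norm_mul_cos_arg z, Complex.norm_mul_sin_arg z⟩
  by_contra! hlt
  have hz : 0 < ‖z‖ := norm_pos_iff.2 fun h0 => by
    rw [h0, Complex.arg_zero] at hlt; exact hΩ.1.not_gt hlt
  have hsin : sin (Ω - z.arg) < 0 :=
    sin_neg_of_neg_of_neg_pi_lt (by linarith) (by linarith [Complex.arg_le_pi z, hΩ.1])
  have : ‖z‖ * sin (Ω - z.arg) = X * sin Ω - Y * cos Ω := by
    rw [sin_sub]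
    linear_combination sin Ω * Complex.norm_mul_cos_arg z - cos Ω * Complex.norm_mul_sin_arg z
  nlinarith

lemma exists_segment_of_le_radius {Ω R R' θ' d' : ℝ} (hΩ : Ω ∈ Ioo 0 π) (hRR' : R ≤ R')
    (hθ'₀ : 0 ≤ θ') (hθ'Ω : θ' ≤ Ω) (hd' : 0 ≤ d') :
    ∃ θ d : ℝ, 0 ≤ θ ∧ θ ≤ Ω ∧ 0 ≤ d ∧
      R * sin Ω + d * cos θ = R' * sin Ω + d' * cos θ' ∧
      R * (1 - cos Ω) + d * sin θ = R' * (1 - cos Ω) + d' * sin θ' := by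
  have hcos : 0 ≤ (R' - R) * (1 - cos Ω) := mul_nonneg (by linarith) (by linarith [cos_le_one Ω])
  have hsin' : 0 ≤ sin θ' := sin_nonneg_of_nonneg_of_le_pi hθ'₀ (by linarith [hΩ.2])
  have hsinΩ : 0 ≤ sin (Ω - θ') := sin_nonneg_of_nonneg_of_le_pi (by linarith) (by linarith [hΩ.2])
  obtain ⟨θ, d, hθ₀, hθΩ, hd, hX, hY⟩ := exists_polar_of_mem_cone
    (X := (R' - R) * sin Ω + d' * cos θ') (Y := (R' - R) * (1 - cos Ω) + d' * sin θ') hΩ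
    (by nlinarith) (by rw [sin_sub] at hsinΩ; nlinarith [sin_sq_add_cos_sq Ω])
  exact ⟨θ, d, hθ₀, hθΩ, hd, by linarith, by linarith⟩

theorem stmt15_general (Ω b₁ b₂ R_a d_J L_J : ℝ) (φ_J : ℝ → ℝ)
    (hΩ : Ω ∈ Set.Ioo 0 Real.pi)
    (hRa : 0 < R_a) (hdJ : 0 ≤ d_J)
    (hJ : Admissible Ω b₁ b₂ L_J φ_J) (hshape : ArcSeg Ω R_a d_J L_J φ_J) :
    (∀ R : ℝ, 0 < R → R ≤ R_a →
      ∃ θ₁ θ₂ d : ℝ, 0 ≤ θ₁ ∧ 0 ≤ θ₂ ∧ θ₁ + θ₂ = Ω ∧ 0 ≤ d ∧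
        ∃ φ : ℝ → ℝ,
          (∀ s ∈ Set.Icc (0:ℝ) (R * θ₁), φ s = s / R) ∧
          (∀ s ∈ Set.Icc (R * θ₁) (R * θ₁ + d), φ s = θ₁) ∧
          (∀ s ∈ Set.Icc (R * θ₁ + d) (R * θ₁ + d + R * θ₂),
            φ s = θ₁ + (s - R * θ₁ - d) / R) ∧
          Admissible Ω b₁ b₂ (R * θ₁ + d + R * θ₂) φ ∧
          maxCurv φ (R * θ₁ + d + R * θ₂) = 1 / R) ∧
    (∃ θ₁ θ₂ d : ℝ, 0 ≤ θ₁ ∧ 0 ≤ θ₂ ∧ θ₁ + θ₂ = Ω ∧ 0 ≤ d ∧ (θ₁ = 0 ∨ θ₂ = 0) ∧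
        ∃ φ : ℝ → ℝ,
          (∀ s ∈ Set.Icc (0:ℝ) (R_a * θ₁), φ s = s / R_a) ∧
          (∀ s ∈ Set.Icc (R_a * θ₁) (R_a * θ₁ + d), φ s = θ₁) ∧
          (∀ s ∈ Set.Icc (R_a * θ₁ + d) (R_a * θ₁ + d + R_a * θ₂),
            φ s = θ₁ + (s - R_a * θ₁ - d) / R_a) ∧
          Admissible Ω b₁ b₂ (R_a * θ₁ + d + R_a * θ₂) φ ∧
          maxCurv φ (R_a * θ₁ + d + R_a * θ₂) = 1 / R_a) := by
  obtain ⟨θ₁, θ₂, h₁, h₂, hθ, hθ0, rfl, hφ⟩ := hshape.exists_eqOn_dubinsAngle hΩ.1.le hdJ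
  obtain ⟨-, -, -, -, -, hb₁, hb₂⟩ := hJ.congr hφ
  rw [integral_cos_dubinsAngle hRa h₁ h₂ hdJ, hθ] at hb₁
  rw [integral_sin_dubinsAngle hRa h₁ h₂ hdJ, hθ] at hb₂
  refine ⟨fun R hR hRRa => ?_, θ₁, θ₂, d_J, h₁, h₂, hθ, hdJ, hθ0,
    exists_arcSegmentArc hRa h₁ h₂ hθ hΩ.1 hdJ hb₁ hb₂⟩
  obtain ⟨θ, d, hθ₀, hθΩ, hd, hx, hy⟩ :=
    exists_segment_of_le_radius hΩ hRRa h₁ (by linarith) hdJ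
  exact ⟨θ, Ω - θ, d, hθ₀, sub_nonneg.2 hθΩ, add_sub_cancel θ Ω, hd,
    exists_arcSegmentArc hR hθ₀ (sub_nonneg.2 hθΩ) (add_sub_cancel θ Ω) hΩ.1 hd
      (hx.trans hb₁) (hy.trans hb₂)⟩

/-- For every `R ∈ (0, R_a]`, there is an admissible Dubins curve
arc(`R`, angle `θ₁`)–segment(`d`)–arc(`R`, angle `θ₂`) with `θ₁ + θ₂ = Ω`, of maximal
curvature `1/R`; for `R = R_a` one may take `θ₁ = 0` or `θ₂ = 0`, recovering the
arc-plus-segment curve. -/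
theorem stmt15 (Ω b₁ b₂ u₀ v₀ R_a d_J L_J : ℝ) (φ_J : ℝ → ℝ)
    (hΩ : Ω ∈ Set.Ioo 0 Real.pi) (hu : 0 < u₀) (hv : 0 < v₀)
    (hb₁ : b₁ = u₀ + v₀ * Real.cos Ω) (hb₂ : b₂ = v₀ * Real.sin Ω)
    (hRa : 0 < R_a) (hdJ : 0 ≤ d_J)
    (hJ : Admissible Ω b₁ b₂ L_J φ_J) (hshape : ArcSeg Ω R_a d_J L_J φ_J) :
    (∀ R : ℝ, 0 < R → R ≤ R_a →
      ∃ θ₁ θ₂ d : ℝ, 0 ≤ θ₁ ∧ 0 ≤ θ₂ ∧ θ₁ + θ₂ = Ω ∧ 0 ≤ d ∧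
        ∃ φ : ℝ → ℝ,
          (∀ s ∈ Set.Icc (0:ℝ) (R * θ₁), φ s = s / R) ∧
          (∀ s ∈ Set.Icc (R * θ₁) (R * θ₁ + d), φ s = θ₁) ∧
          (∀ s ∈ Set.Icc (R * θ₁ + d) (R * θ₁ + d + R * θ₂),
            φ s = θ₁ + (s - R * θ₁ - d) / R) ∧
          Admissible Ω b₁ b₂ (R * θ₁ + d + R * θ₂) φ ∧
          maxCurv φ (R * θ₁ + d + R * θ₂) = 1 / R) ∧
    (∃ θ₁ θ₂ d : ℝ, 0 ≤ θ₁ ∧ 0 ≤ θ₂ ∧ θ₁ + θ₂ = Ω ∧ 0 ≤ d ∧ (θ₁ = 0 ∨ θ₂ = 0) ∧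
        ∃ φ : ℝ → ℝ,
          (∀ s ∈ Set.Icc (0:ℝ) (R_a * θ₁), φ s = s / R_a) ∧
          (∀ s ∈ Set.Icc (R_a * θ₁) (R_a * θ₁ + d), φ s = θ₁) ∧
          (∀ s ∈ Set.Icc (R_a * θ₁ + d) (R_a * θ₁ + d + R_a * θ₂),
            φ s = θ₁ + (s - R_a * θ₁ - d) / R_a) ∧
          Admissible Ω b₁ b₂ (R_a * θ₁ + d + R_a * θ₂) φ ∧
          maxCurv φ (R_a * θ₁ + d + R_a * θ₂) = 1 / R_a) :=
  stmt15_general Ω b₁ b₂ R_a d_J L_J φ_J hΩ hRa hdJ hJ hshape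
end
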